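/- arXiv:1108.0519 — 5 statements merged into one kernel-verified Lean document; each statement's English description precedes it below -/
import Mathlib

section
/- Tropical infinite dual Nullstellensatz for univariate tropical polynomials: let f_1, …, f_s be univariate tropical polynomials with exponent sets S_j ⊆ ℕ and coefficients c_j : S_j → ℝ. Then there exists x ∈ ℝ that is a tropical zero of every f_j if and only if the infinite Cayley matrix C has a tropical zero, i.e. if and only if there exists a family of reals (y_k)_{k ∈ ℤ} such that for every i ∈ ℤ and every j ∈ {1, …, s} the minimum min_{l ∈ S_j} (c_j(l) + y_{l+i}) is attained for at least two distinct l ∈ S_j. -/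
/-!
For a Cayley zero `y`, let `α` be the supremum of the slopes `x` such that `y k ≥ x * k - B`
for all `k ≥ 0`. Slopes at which the highest, resp. lowest, exponent is the strict minimiser
of `c l + l * x` bound `α` from below, resp. above. If `α` were not a tropical zero of some
`f_j`, a single exponent `t` would attain the minimum of `c_j l + l * α` with margin
`ρ * |l - t|`. The second minimiser of the row of `f_j` through `a` then moves `a` to
`a + l - t` and lowers `y - α * k` by `ρ * |l - t|`; by infinite descent the bound at slope
`α - ρ / 4` becomes one at slope `α + ρ / 2`, contradicting the choice of `α`.
-/

/-- A univariate tropical polynomial is given by a finite nonempty set `S ⊆ ℕ` of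
exponents and coefficients `c : S → ℝ`; `x` is a tropical zero if the minimum
`min_{l ∈ S} (c l + l·x)` is attained for at least two distinct `l ∈ S`. -/
def IsTropicalZero (S : Finset ℕ) (c : ℕ → ℝ) (x : ℝ) : Prop :=
  ∃ l₁ ∈ S, ∃ l₂ ∈ S, l₁ ≠ l₂ ∧
    (∀ l ∈ S, c l₁ + (l₁ : ℝ) * x ≤ c l + (l : ℝ) * x) ∧
    c l₁ + (l₁ : ℝ) * x = c l₂ + (l₂ : ℝ) * x

/-- A tropical zero of the infinite Cayley matrix `C`: a family of reals
`(y_k)_{k ∈ ℤ}` such that for every row `(i, j)`, `i ∈ ℤ`, the minimum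
`min_{l ∈ S j} (c j l + y (l + i))` is attained for at least two distinct `l ∈ S j`. -/
def IsInfiniteCayleyZero (s : ℕ) (S : Fin s → Finset ℕ) (c : Fin s → ℕ → ℝ)
    (y : ℤ → ℝ) : Prop :=
  ∀ i : ℤ, ∀ j : Fin s,
    ∃ l₁ ∈ S j, ∃ l₂ ∈ S j, l₁ ≠ l₂ ∧
      (∀ l ∈ S j, c j l₁ + y ((l₁ : ℤ) + i) ≤ c j l + y ((l : ℤ) + i)) ∧
      c j l₁ + y ((l₁ : ℤ) + i) = c j l₂ + y ((l₂ : ℤ) + i)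

open Filter Topology

def AttainsMinTwice (S : Finset ℕ) (φ : ℕ → ℝ) : Prop :=
  ∃ l₁ ∈ S, ∃ l₂ ∈ S, l₁ ≠ l₂ ∧ (∀ l ∈ S, φ l₁ ≤ φ l) ∧ φ l₁ = φ l₂

namespace AttainsMinTwice

variable {S : Finset ℕ} {φ : ℕ → ℝ}

lemma nonempty (h : AttainsMinTwice S φ) : S.Nonempty :=
  let ⟨l, hl, _⟩ := h
  ⟨l, hl⟩

lemma exists_ne_le (h : AttainsMinTwice S φ) {t : ℕ} (ht : t ∈ S) :
    ∃ l ∈ S, l ≠ t ∧ φ l ≤ φ t := by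
  obtain ⟨l₁, h₁, l₂, h₂, hne, hmin, heq⟩ := h
  by_cases h₁t : l₁ = t
  · subst h₁t
    exact ⟨l₂, h₂, hne.symm, heq.ge⟩
  · exact ⟨l₁, h₁, h₁t, hmin t ht⟩

end AttainsMinTwice

lemma exists_forall_lt_of_not_attainsMinTwice {S : Finset ℕ} {φ : ℕ → ℝ} (hS : S.Nonempty)
    (h : ¬AttainsMinTwice S φ) : ∃ t ∈ S, ∀ l ∈ S, l ≠ t → φ t < φ l := by
  obtain ⟨t, ht, hmin⟩ := S.exists_min_image φ hS
  refine ⟨t, ht, fun l hl hne => lt_of_not_ge fun hle => h ?_⟩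
  exact ⟨t, ht, l, hl, hne.symm, hmin, le_antisymm (hmin l hl) hle⟩

def IsSharpMinAt (S : Finset ℕ) (c : ℕ → ℝ) (x : ℝ) (t : ℕ) (ρ : ℝ) : Prop :=
  ∀ l ∈ S, c t + t * x + ρ * |(l : ℝ) - t| ≤ c l + l * x

lemma exists_isSharpMinAt_of_forall_le (S : Finset ℕ) (c : ℕ → ℝ) {t : ℕ}
    (ht : ∀ l ∈ S, l ≤ t) : ∃ x ρ, 0 < ρ ∧ IsSharpMinAt S c x t ρ := by
  set M := ∑ l ∈ S, |c l - c t|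
  refine ⟨-1 - M, 1, one_pos, fun l hl => ?_⟩
  rcases eq_or_ne l t with rfl | hne
  · simp
  have hlt : (l : ℝ) + 1 ≤ t := by exact_mod_cast (ht l hl).lt_of_ne hne
  have hM : |c l - c t| ≤ M := Finset.single_le_sum (fun l _ => abs_nonneg (c l - c t)) hl
  rw [abs_of_neg (by linarith)]
  nlinarith [neg_abs_le (c l - c t), abs_nonneg (c l - c t)]

lemma exists_isSharpMinAt_of_forall_ge (S : Finset ℕ) (c : ℕ → ℝ) {t : ℕ}
    (ht : ∀ l ∈ S, t ≤ l) : ∃ x ρ, 0 < ρ ∧ IsSharpMinAt S c x t ρ := by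
  set M := ∑ l ∈ S, |c l - c t|
  refine ⟨1 + M, 1, one_pos, fun l hl => ?_⟩
  rcases eq_or_ne l t with rfl | hne
  · simp
  have hlt : (t : ℝ) + 1 ≤ l := by exact_mod_cast (ht l hl).lt_of_ne hne.symm
  have hM : |c l - c t| ≤ M := Finset.single_le_sum (fun l _ => abs_nonneg (c l - c t)) hl
  rw [abs_of_pos (by linarith)]
  nlinarith [neg_abs_le (c l - c t), abs_nonneg (c l - c t)]

lemma exists_isSharpMinAt_of_not_isTropicalZero {S : Finset ℕ} {c : ℕ → ℝ} {x : ℝ}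
    (hS : S.Nonempty) (h : ¬IsTropicalZero S c x) :
    ∃ t ∈ S, ∃ ρ > 0, IsSharpMinAt S c x t ρ := by
  obtain ⟨t, ht, hlt⟩ := exists_forall_lt_of_not_attainsMinTwice hS h
  have hev : ∀ l ∈ S, ∀ᶠ ρ in 𝓝 (0 : ℝ),
      c t + t * x + ρ * |(l : ℝ) - t| ≤ c l + l * x := by
    intro l hl
    rcases eq_or_ne l t with rfl | hne
    · simp
    have hlim : Tendsto (fun ρ : ℝ => c t + t * x + ρ * |(l : ℝ) - t|) (𝓝 0)
        (𝓝 (c t + t * x)) := (by fun_prop : Continuous _).tendsto' 0 _ (by simp)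
    exact (hlim.eventually_lt_const (hlt l hl hne)).mono fun _ => le_of_lt
  obtain ⟨ρ, hρ, hρpos⟩ :=
    (((eventually_all_finset S).2 hev).filter_mono nhdsWithin_le_nhds |>.and
      (self_mem_nhdsWithin : ∀ᶠ ρ in 𝓝[>] (0 : ℝ), 0 < ρ)).exists
  exact ⟨t, ht, ρ, hρpos, hρ⟩

lemma one_le_abs_natCast_sub_natCast {l t : ℕ} (h : l ≠ t) : (1 : ℝ) ≤ |(l : ℝ) - t| := by
  have : (1 : ℤ) ≤ |(l : ℤ) - t| := Int.one_le_abs (sub_ne_zero.2 (by exact_mod_cast h))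
  exact_mod_cast this

lemma forall_not_of_descent {α : Type*} {P : α → Prop} (h : α → ℝ) {B δ : ℝ} (hδ : 0 < δ)
    (hB : ∀ a, P a → B ≤ h a) (hstep : ∀ a, P a → ∃ b, P b ∧ h b + δ ≤ h a) (a : α) :
    ¬P a := by
  have key : ∀ n : ℕ, ∀ a, P a → B + n * δ ≤ h a := by
    intro n
    induction n with
    | zero => simpa using hB
    | succ n ih =>
      intro a ha
      obtain ⟨b, hb, hle⟩ := hstep a ha
      have := ih b hb
      push_cast
      linarith
  intro ha
  obtain ⟨n, hn⟩ := exists_nat_gt ((h a - B) / δ)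
  rw [div_lt_iff₀ hδ] at hn
  linarith [key n a ha]

def HasAffineLowerBound (y : ℤ → ℝ) (x : ℝ) : Prop :=
  ∃ B, ∀ k : ℤ, 0 ≤ k → x * k - B ≤ y k

namespace HasAffineLowerBound

variable {y : ℤ → ℝ} {x : ℝ}

lemma mono (h : HasAffineLowerBound y x) {x' : ℝ} (hx : x' ≤ x) : HasAffineLowerBound y x' := by
  obtain ⟨B, hB⟩ := h
  refine ⟨B, fun k hk => le_trans ?_ (hB k hk)⟩
  have : x' * k ≤ x * k := mul_le_mul_of_nonneg_right hx (by exact_mod_cast hk)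
  linarith

lemma exists_forall_ge_neg (h : HasAffineLowerBound y x) (N : ℕ) :
    ∃ B, ∀ k : ℤ, -(N : ℤ) ≤ k → x * k - B ≤ y k := by
  obtain ⟨B₀, hB₀⟩ := h
  obtain ⟨B₁, hB₁⟩ := ((Set.finite_Icc (-(N : ℤ)) 0).image fun k => y k - x * k).bddBelow
  refine ⟨max B₀ (-B₁), fun k hk => ?_⟩
  rcases le_or_gt 0 k with hk0 | hk0
  · linarith [hB₀ k hk0, le_max_left B₀ (-B₁)]
  · linarith [hB₁ ⟨k, ⟨hk, hk0.le⟩, rfl⟩, le_max_right B₀ (-B₁)]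

end HasAffineLowerBound

def IsCayleyZero (S : Finset ℕ) (c : ℕ → ℝ) (y : ℤ → ℝ) : Prop :=
  ∀ i : ℤ, AttainsMinTwice S fun l => c l + y (l + i)

lemma isInfiniteCayleyZero_iff {s : ℕ} {S : Fin s → Finset ℕ} {c : Fin s → ℕ → ℝ}
    {y : ℤ → ℝ} : IsInfiniteCayleyZero s S c y ↔ ∀ j, IsCayleyZero (S j) (c j) y :=
  forall_comm

lemma IsTropicalZero.isCayleyZero {S : Finset ℕ} {c : ℕ → ℝ} {x : ℝ}
    (hx : IsTropicalZero S c x) : IsCayleyZero S c fun k => x * k := by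
  intro i
  obtain ⟨l₁, h₁, l₂, h₂, hne, hmin, heq⟩ := hx
  refine ⟨l₁, h₁, l₂, h₂, hne, fun l hl => ?_, ?_⟩
  · push_cast
    linarith [hmin l hl]
  · push_cast
    linarith

namespace IsCayleyZero

variable {S : Finset ℕ} {c : ℕ → ℝ} {y : ℤ → ℝ}

lemma nonempty (hy : IsCayleyZero S c y) : S.Nonempty :=
  (hy 0).nonempty

lemma exists_step (hy : IsCayleyZero S c y) {x ρ : ℝ} {t : ℕ} (ht : t ∈ S)
    (hgap : IsSharpMinAt S c x t ρ) (a : ℤ) : ∃ l ∈ S, l ≠ t ∧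
      y (a + l - t) - x * ((a + l - t : ℤ) : ℝ) + ρ * |(l : ℝ) - t| ≤ y a - x * a := by
  obtain ⟨l, hl, hne, hle⟩ := (hy (a - t)).exists_ne_le ht
  refine ⟨l, hl, hne, ?_⟩
  have hb : (l : ℤ) + (a - t) = a + l - t := by ring
  simp only [hb, add_sub_cancel] at hle
  push_cast
  linarith [hgap l hl]

lemma hasAffineLowerBound_of_isSharpMinAt_of_forall_le (hy : IsCayleyZero S c y) {x ρ : ℝ}
    {t : ℕ} (ht : t ∈ S) (hmax : ∀ l ∈ S, l ≤ t) (hρ : 0 ≤ ρ)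
    (hgap : IsSharpMinAt S c x t ρ) :
    HasAffineLowerBound y x := by
  obtain ⟨B, hB⟩ := ((Set.finite_Icc (-(t : ℤ)) 0).image fun k => y k - x * k).bddBelow
  refine ⟨-B, fun a ha => ?_⟩
  by_contra hlt
  refine forall_not_of_descent (P := fun a : ℤ => 0 ≤ a ∧ y a - x * a < B) (fun a => a)
    (B := 0) one_pos (fun a ha => by exact_mod_cast ha.1) (fun a ha => ?_) a ⟨ha, by linarith⟩
  obtain ⟨l, hl, hne, hle⟩ := hy.exists_step ht hgap a
  have hlt : l < t := (hmax l hl).lt_of_ne hne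
  have hb : y (a + l - t) - x * ((a + l - t : ℤ) : ℝ) < B := by
    linarith [mul_nonneg hρ (abs_nonneg ((l : ℝ) - t)), ha.2]
  have hb0 : 0 ≤ a + l - t := by
    by_contra! hneg
    exact hb.not_ge (hB ⟨_, ⟨by omega, hneg.le⟩, rfl⟩)
  exact ⟨a + l - t, ⟨hb0, hb⟩, by exact_mod_cast (by omega : a + l - t + 1 ≤ a)⟩

lemma not_hasAffineLowerBound_of_isSharpMinAt_of_forall_ge (hy : IsCayleyZero S c y)
    {x ρ : ℝ} {t : ℕ} (ht : t ∈ S) (hmin : ∀ l ∈ S, t ≤ l) (hρ : 0 < ρ)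
    (hgap : IsSharpMinAt S c x t ρ) :
    ¬HasAffineLowerBound y x := by
  rintro ⟨B, hB⟩
  refine forall_not_of_descent (P := fun a : ℤ => 0 ≤ a) (fun a => y a - x * a) (B := -B) hρ
    (fun a ha => by linarith [hB a ha]) (fun a ha => ?_) 0 le_rfl
  obtain ⟨l, hl, hne, hle⟩ := hy.exists_step ht hgap a
  have hlt : t < l := (hmin l hl).lt_of_ne hne.symm
  refine ⟨a + l - t, by omega, ?_⟩
  linarith [le_mul_of_one_le_right hρ.le (one_le_abs_natCast_sub_natCast hne)]

lemma hasAffineLowerBound_add_of_isSharpMinAt (hy : IsCayleyZero S c y) {x ρ : ℝ} {t : ℕ}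
    (ht : t ∈ S) (hρ : 0 < ρ) (hgap : IsSharpMinAt S c x t ρ)
    (h : HasAffineLowerBound y (x - ρ / 4)) : HasAffineLowerBound y (x + ρ / 2) := by
  obtain ⟨B, hB⟩ := h.exists_forall_ge_neg t
  refine ⟨B, fun a ha => ?_⟩
  by_contra hlt
  refine forall_not_of_descent (P := fun a : ℤ => 0 ≤ a ∧ y a < (x + ρ / 2) * a - B)
    (fun a => y a - (x - ρ / 4) * a) (B := -B) (half_pos hρ)
    (fun a ha => by linarith [hB a (by omega)]) (fun a ha => ?_) a ⟨ha, by linarith⟩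
  obtain ⟨l, hl, hne, hle⟩ := hy.exists_step ht hgap a
  set b : ℤ := a + l - t
  set d : ℝ := (l : ℝ) - t
  have hbd : (b : ℝ) = a + d := by push_cast [b, d]; ring
  have hd_pos := mul_nonneg hρ.le (abs_nonneg d)
  have hd_le := mul_le_mul_of_nonneg_left (le_abs_self d) hρ.le
  have hd_ge := mul_le_mul_of_nonneg_left (neg_le_abs d) hρ.le
  have hd_one := mul_le_mul_of_nonneg_left (one_le_abs_natCast_sub_natCast hne : 1 ≤ |d|) hρ.le
  rw [hbd] at hle
  refine ⟨b, ⟨?_, ?_⟩, ?_⟩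
  · -- the bound of slope `x - ρ / 4` at `b ≥ -t` is compatible with `P b` only if `b > 0`
    have hlow := hB b (by omega)
    rw [hbd] at hlow
    have hpos : 0 < ρ * (a + d) := by linarith [ha.2]
    have : (0 : ℝ) < b := hbd ▸ pos_of_mul_pos_right hpos hρ.le
    exact_mod_cast this.le
  · rw [hbd]
    linarith [ha.2]
  · rw [hbd]
    linarith

lemma nonempty_setOf_hasAffineLowerBound (hy : IsCayleyZero S c y) :
    {x | HasAffineLowerBound y x}.Nonempty := by
  have hmax : ∀ l ∈ S, l ≤ S.max' hy.nonempty := S.le_max'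
  obtain ⟨x, ρ, hρ, hgap⟩ := exists_isSharpMinAt_of_forall_le S c hmax
  exact ⟨x, hy.hasAffineLowerBound_of_isSharpMinAt_of_forall_le (S.max'_mem _) hmax hρ.le hgap⟩

lemma bddAbove_setOf_hasAffineLowerBound (hy : IsCayleyZero S c y) :
    BddAbove {x | HasAffineLowerBound y x} := by
  have hmin : ∀ l ∈ S, S.min' hy.nonempty ≤ l := S.min'_le
  obtain ⟨x, ρ, hρ, hgap⟩ := exists_isSharpMinAt_of_forall_ge S c hmin
  refine ⟨x, fun x' hx' => le_of_not_gt fun hlt => ?_⟩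
  exact hy.not_hasAffineLowerBound_of_isSharpMinAt_of_forall_ge (S.min'_mem _) hmin hρ hgap
    (hx'.mono hlt.le)

lemma isTropicalZero_sSup (hy : IsCayleyZero S c y)
    (hne : {x | HasAffineLowerBound y x}.Nonempty) (hbdd : BddAbove {x | HasAffineLowerBound y x}) :
    IsTropicalZero S c (sSup {x | HasAffineLowerBound y x}) := by
  set α := sSup {x | HasAffineLowerBound y x}
  by_contra h
  obtain ⟨t, ht, ρ, hρ, hgap⟩ := exists_isSharpMinAt_of_not_isTropicalZero hy.nonempty h
  obtain ⟨x, hx, hlt⟩ := exists_lt_of_lt_csSup hne (by linarith : α - ρ / 4 < α)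
  have hup := le_csSup hbdd
    (hy.hasAffineLowerBound_add_of_isSharpMinAt ht hρ hgap (hx.mono hlt.le))
  linarith

end IsCayleyZero

theorem tropical_infinite_dual_nullstellensatz_general
    (s : ℕ) (S : Fin s → Finset ℕ)
    (c : Fin s → ℕ → ℝ) :
    (∃ x : ℝ, ∀ j : Fin s, IsTropicalZero (S j) (c j) x) ↔
      (∃ y : ℤ → ℝ, IsInfiniteCayleyZero s S c y) := by
  simp only [isInfiniteCayleyZero_iff]
  constructor
  · rintro ⟨x, hx⟩
    exact ⟨fun k => x * k, fun j => (hx j).isCayleyZero⟩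
  · rintro ⟨y, hy⟩
    rcases isEmpty_or_nonempty (Fin s) with _ | ⟨⟨j₀⟩⟩
    · exact ⟨0, isEmptyElim⟩
    exact ⟨_, fun j => (hy j).isTropicalZero_sSup (hy j₀).nonempty_setOf_hasAffineLowerBound
      (hy j₀).bddAbove_setOf_hasAffineLowerBound⟩

/-- Tropical infinite dual Nullstellensatz for univariate tropical polynomials:
the system `f₁, …, f_s` has a common tropical zero iff the infinite Cayley matrix
has a tropical zero. -/
theorem tropical_infinite_dual_nullstellensatz
    (s : ℕ) (S : Fin s → Finset ℕ) (hS : ∀ j, (S j).Nonempty)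
    (c : Fin s → ℕ → ℝ) :
    (∃ x : ℝ, ∀ j : Fin s, IsTropicalZero (S j) (c j) x) ↔
      (∃ y : ℤ → ℝ, IsInfiniteCayleyZero s S c y) :=
  tropical_infinite_dual_nullstellensatz_general s S c
end

section
/- Row-contact correspondence (univariate case of the convex-geometric rephrasing): let f be a univariate tropical polynomial in convex form with exponent set S = ℤ ∩ [m, M] (m ≤ M integers) and coefficients c : S → ℝ satisfying (l_3 − l_2)·c(l_1) + (l_2 − l_1)·c(l_3) ≥ (l_3 − l_1)·c(l_2) for all l_1 ≤ l_2 ≤ l_3 in S, let P = convexHull{(c(l), l) : l ∈ S} + {(t, 0) : t ≥ 0} ⊆ ℝ², let y : ℤ → ℝ, and let Y = {(−y(l), l) : l ∈ ℤ}. Fix i ∈ ℤ and set a := −min_{l ∈ S} (c(l) + y(l + i)). Then: (1) P + (a, i) lies above Y, and P + (a', i) does not lie above Y for any a' < a; (2) (P + (a, i)) ∩ Y = {(−y(l + i), l + i) : l ∈ S and c(l) + y(l + i) = min_{l' ∈ S} (c(l') + y(l' + i))}; in particular (P + (a, i)) ∩ Y contains at least two points if and only if the minimum min_{l ∈ S}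 (c(l) + y(l + i)) is attained for at least two distinct l ∈ S. -/
open Pointwise

/-- The extended Newton polygon of a univariate tropical polynomial with exponent
set `S ⊆ ℤ` and coefficients `c`: the convex hull of the points `(c l, l)`,
`l ∈ S`, plus the ray `{(t, 0) : t ≥ 0}`. -/
def NewtonPolygon (S : Finset ℤ) (c : ℤ → ℝ) : Set (ℝ × ℝ) :=
  convexHull ℝ {p | ∃ l ∈ S, p = (c l, (l : ℝ))} + {q | ∃ t : ℝ, 0 ≤ t ∧ q = (t, 0)}

/-- The translate `P + (a, i)`. -/
def shiftSet (P : Set (ℝ × ℝ)) (a : ℝ) (i : ℤ) : Set (ℝ × ℝ) :=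
  (fun p => (p.1 + a, p.2 + (i : ℝ))) '' P

/-- `U` lies above `Y = {(-y l, l) : l ∈ ℤ}` if every point `(v, l) ∈ U` with
integer second coordinate `l` satisfies `v ≥ -y l`. -/
def LiesAbove (y : ℤ → ℝ) (U : Set (ℝ × ℝ)) : Prop :=
  ∀ (v : ℝ) (l : ℤ), (v, (l : ℝ)) ∈ U → -y l ≤ v

/-- The set `Y = {(-y l, l) : l ∈ ℤ} ⊆ ℝ²`. -/
def YSet (y : ℤ → ℝ) : Set (ℝ × ℝ) := {p | ∃ l : ℤ, p = (-y l, (l : ℝ))}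

lemma hull_above_chord (m M : ℤ) (S : Finset ℤ) (hS : S = Finset.Icc m M)
    (c : ℤ → ℝ)
    (hconv : ∀ l₁ l₂ l₃ : ℤ, l₁ ∈ S → l₂ ∈ S → l₃ ∈ S → l₁ ≤ l₂ → l₂ ≤ l₃ →
      ((l₃ - l₁ : ℤ) : ℝ) * c l₂ ≤ ((l₃ - l₂ : ℤ) : ℝ) * c l₁ + ((l₂ - l₁ : ℤ) : ℝ) * c l₃)
    (l : ℤ) (hl : l ∈ S) (x s : ℝ)
    (hx : (x, s) ∈ convexHull ℝ {p : ℝ × ℝ | ∃ l ∈ S, p = (c l, (l : ℝ))})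
    (hs : s = (l : ℝ)) : c l ≤ x := by
  subst hS
  simp only [Finset.mem_Icc] at hl
  set k : ℝ := if l < M then c (l+1) - c l else c l - c (l-1) with hk
  set H : Set (ℝ × ℝ) := {p | c l + (p.2 - (l : ℝ)) * k ≤ p.1} with hH
  have hHconv : Convex ℝ H := by
    intro p hp q hq u v hu hv huv
    simp only [hH, Set.mem_setOf_eq] at hp hq ⊢
    have h1 : (u • p + v • q).1 = u * p.1 + v * q.1 := rfl
    have h2 : (u • p + v • q).2 = u * p.2 + v * q.2 := rfl
    rw [h1, h2]
    have hv' : v = 1 - u := by linarith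
    subst hv'
    nlinarith [mul_le_mul_of_nonneg_left hp hu, mul_le_mul_of_nonneg_left hq hv]
  have hsub : {p : ℝ × ℝ | ∃ l ∈ Finset.Icc m M, p = (c l, (l : ℝ))} ⊆ H := by
    rintro p ⟨l', hl', rfl⟩
    simp only [Finset.mem_Icc] at hl'
    simp only [hH, Set.mem_setOf_eq]
    -- goal : c l + ((l':ℝ) - l) * k ≤ c l'
    by_cases hlM : l < M
    · rw [hk, if_pos hlM]
      rcases le_or_gt l' l with h | h
      · have := hconv l' l (l+1) (by simp [Finset.mem_Icc]; omega)
          (by simp [Finset.mem_Icc]; omega) (by simp [Finset.mem_Icc]; omega) h (by omega)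
        push_cast at this ⊢
        nlinarith [this]
      · have h1 : l + 1 ≤ l' := by omega
        have := hconv l (l+1) l' (by simp [Finset.mem_Icc]; omega)
          (by simp [Finset.mem_Icc]; omega) (by simp [Finset.mem_Icc]; omega) (by omega) h1
        push_cast at this ⊢
        nlinarith [this]
    · rw [hk, if_neg hlM]
      have hlM' : l = M := by omega
      rcases eq_or_lt_of_le hl'.2 with h | h
      · have : l' = l := by omega
        subst this; simp
      · have := hconv l' (l-1) l (by simp [Finset.mem_Icc]; omega)
          (by simp [Finset.mem_Icc]; omega) (by simp [Finset.mem_Icc]; omega) (by omega) (by omega)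
        push_cast at this ⊢
        nlinarith [this]
  have := convexHull_min hsub hHconv hx
  simp only [hH, Set.mem_setOf_eq, hs] at this
  simpa using this

lemma hull_snd_mem (m M : ℤ) (S : Finset ℤ) (hS : S = Finset.Icc m M)
    (c : ℤ → ℝ) (x s : ℝ)
    (hx : (x, s) ∈ convexHull ℝ {p : ℝ × ℝ | ∃ l ∈ S, p = (c l, (l : ℝ))}) :
    (m : ℝ) ≤ s ∧ s ≤ (M : ℝ) := by
  subst hS
  set H : Set (ℝ × ℝ) := {p | (m : ℝ) ≤ p.2 ∧ p.2 ≤ (M : ℝ)} with hH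
  have hHconv : Convex ℝ H := by
    intro p hp q hq u v hu hv huv
    simp only [hH, Set.mem_setOf_eq] at hp hq ⊢
    have h2 : (u • p + v • q).2 = u * p.2 + v * q.2 := rfl
    rw [h2]
    have hv' : v = 1 - u := by linarith
    subst hv'
    constructor
    · nlinarith [mul_nonneg hu (sub_nonneg.2 hp.1), mul_nonneg hv (sub_nonneg.2 hq.1)]
    · nlinarith [mul_nonneg hu (sub_nonneg.2 hp.2), mul_nonneg hv (sub_nonneg.2 hq.2)]
  have hsub : {p : ℝ × ℝ | ∃ l ∈ Finset.Icc m M, p = (c l, (l : ℝ))} ⊆ H := by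
    rintro p ⟨l', hl', rfl⟩
    simp only [Finset.mem_Icc] at hl'
    constructor
    · show (m:ℝ) ≤ (l':ℝ); exact_mod_cast hl'.1
    · show (l':ℝ) ≤ (M:ℝ); exact_mod_cast hl'.2
  exact convexHull_min hsub hHconv hx

/-- Row-contact correspondence (univariate case of the convex-geometric
rephrasing): for `f` in convex form with exponent set `S = ℤ ∩ [m, M]`,
`P` its extended Newton polygon, and `a := -min_{l ∈ S} (c l + y (l + i))`:
(1) `P + (a, i)` lies above `Y` and is the lowest such shiftSet;
(2) `(P + (a, i)) ∩ Y` consists exactly of the points `(-y (l + i), l + i)` for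
the `l ∈ S` attaining the minimum;
(3) in particular, the intersection has at least two points iff the minimum
`min_{l ∈ S} (c l + y (l + i))` is attained for at least two distinct `l ∈ S`. -/
theorem rowContact_correspondence
    (m M : ℤ) (hmM : m ≤ M) (S : Finset ℤ) (hS : S = Finset.Icc m M)
    (c : ℤ → ℝ)
    (hconv : ∀ l₁ l₂ l₃ : ℤ, l₁ ∈ S → l₂ ∈ S → l₃ ∈ S → l₁ ≤ l₂ → l₂ ≤ l₃ →
      ((l₃ - l₁ : ℤ) : ℝ) * c l₂ ≤ ((l₃ - l₂ : ℤ) : ℝ) * c l₁ + ((l₂ - l₁ : ℤ) : ℝ) * c l₃)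
    (y : ℤ → ℝ) (i : ℤ) (hSne : S.Nonempty) (a : ℝ)
    (ha : a = -(S.inf' hSne fun l => c l + y (l + i))) :
    (LiesAbove y (shiftSet (NewtonPolygon S c) a i) ∧
      ∀ a' < a, ¬ LiesAbove y (shiftSet (NewtonPolygon S c) a' i)) ∧
    (shiftSet (NewtonPolygon S c) a i ∩ YSet y =
      {p | ∃ l ∈ S, (c l + y (l + i) = S.inf' hSne fun l' => c l' + y (l' + i)) ∧
        p = (-y (l + i), ((l + i : ℤ) : ℝ))}) ∧
    ((∃ p ∈ shiftSet (NewtonPolygon S c) a i ∩ YSet y,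
        ∃ q ∈ shiftSet (NewtonPolygon S c) a i ∩ YSet y, p ≠ q) ↔
      (∃ l₁ ∈ S, ∃ l₂ ∈ S, l₁ ≠ l₂ ∧
        (∀ l ∈ S, c l₁ + y (l₁ + i) ≤ c l + y (l + i)) ∧
        c l₁ + y (l₁ + i) = c l₂ + y (l₂ + i))) := by
  set μ : ℝ := S.inf' hSne fun l => c l + y (l + i) with hμ
  have hμle : ∀ l ∈ S, μ ≤ c l + y (l + i) := fun l hl => Finset.inf'_le _ hl
  obtain ⟨l₀, hl₀S, hl₀⟩ := Finset.exists_mem_eq_inf' hSne fun l => c l + y (l + i)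
  have hmemNP : ∀ l ∈ S, (c l, (l : ℝ)) ∈ NewtonPolygon S c := by
    intro l hl
    have h1 : (c l, (l : ℝ)) ∈ convexHull ℝ {p : ℝ × ℝ | ∃ l ∈ S, p = (c l, (l : ℝ))} :=
      subset_convexHull ℝ _ ⟨l, hl, rfl⟩
    have h2 : ((0 : ℝ), (0 : ℝ)) ∈ {q : ℝ × ℝ | ∃ t : ℝ, 0 ≤ t ∧ q = (t, 0)} :=
      ⟨0, le_rfl, rfl⟩
    have := Set.add_mem_add h1 h2
    simpa [NewtonPolygon] using this
  have hmemShift : ∀ l ∈ S, ∀ a' : ℝ,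
      (c l + a', (l : ℝ) + (i : ℝ)) ∈ shiftSet (NewtonPolygon S c) a' i :=
    fun l hl a' => ⟨(c l, (l : ℝ)), hmemNP l hl, rfl⟩
  have key : ∀ (a' v : ℝ) (l' : ℤ), (v, (l' : ℝ)) ∈ shiftSet (NewtonPolygon S c) a' i →
      ∃ l ∈ S, l + i = l' ∧ c l + a' ≤ v := by
    rintro a' v l' ⟨q, hq, heq⟩
    obtain ⟨u, hu, w, hw, huw⟩ := hq
    obtain ⟨t, ht, rfl⟩ := hw
    have hq1 : q.1 = u.1 + t := by rw [← huw]; rfl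
    have hq2 : q.2 = u.2 := by rw [← huw]; simp
    have hv : v = u.1 + t + a' := by rw [← hq1]; exact (congrArg Prod.fst heq).symm
    have hl' : (l' : ℝ) = u.2 + (i : ℝ) := by rw [← hq2]; exact (congrArg Prod.snd heq).symm
    have hu' : (u.1, u.2) ∈ convexHull ℝ {p : ℝ × ℝ | ∃ l ∈ S, p = (c l, (l : ℝ))} := hu
    obtain ⟨hm, hM⟩ := hull_snd_mem m M S hS c u.1 u.2 hu'
    have hus : u.2 = ((l' - i : ℤ) : ℝ) := by push_cast; linarith
    set l : ℤ := l' - i with hldef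
    have hlS : l ∈ S := by
      rw [hS, Finset.mem_Icc]
      rw [hus] at hm hM
      exact ⟨by exact_mod_cast hm, by exact_mod_cast hM⟩
    have hcl : c l ≤ u.1 := hull_above_chord m M S hS c hconv l hlS u.1 u.2 hu' hus
    exact ⟨l, hlS, by omega, by linarith⟩
  have part1a : LiesAbove y (shiftSet (NewtonPolygon S c) a i) := by
    intro v l' hmem
    obtain ⟨l, hlS, hli, hle⟩ := key a v l' hmem
    have := hμle l hlS
    rw [← hli]
    rw [ha] at hle
    linarith
  have part2 : shiftSet (NewtonPolygon S c) a i ∩ YSet y =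
      {p | ∃ l ∈ S, (c l + y (l + i) = μ) ∧ p = (-y (l + i), ((l + i : ℤ) : ℝ))} := by
    ext p
    constructor
    · rintro ⟨hp1, l', rfl⟩
      obtain ⟨l, hlS, hli, hle⟩ := key a (-y l') l' hp1
      rw [ha] at hle
      have h1 := hμle l hlS
      subst hli
      exact ⟨l, hlS, by linarith, rfl⟩
    · rintro ⟨l, hlS, hmin, rfl⟩
      constructor
      · have h1 : -y (l + i) = c l + a := by rw [ha, ← hmin]; ring
        have h2 : ((l + i : ℤ) : ℝ) = (l : ℝ) + (i : ℝ) := by push_cast; ring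
        rw [h1, h2]
        exact hmemShift l hlS a
      · exact ⟨l + i, rfl⟩
  refine ⟨⟨part1a, ?_⟩, part2, ?_⟩
  · intro a' ha' hLA
    have hm := hmemShift l₀ hl₀S a'
    have h1 : ((l₀ + i : ℤ) : ℝ) = (l₀ : ℝ) + (i : ℝ) := by push_cast; ring
    have := hLA (c l₀ + a') (l₀ + i) (by rw [h1]; exact hm)
    have hμ0 : μ = c l₀ + y (l₀ + i) := hl₀
    rw [ha] at ha'
    linarith
  · rw [part2]
    constructor
    · rintro ⟨p, ⟨l₁, hl₁S, he₁, rfl⟩, q, ⟨l₂, hl₂S, he₂, rfl⟩, hpq⟩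
      have hne : l₁ ≠ l₂ := by
        rintro rfl
        exact hpq rfl
      refine ⟨l₁, hl₁S, l₂, hl₂S, hne, ?_, he₁.trans he₂.symm⟩
      intro l hl
      rw [he₁]; exact hμle l hl
    · rintro ⟨l₁, hl₁S, l₂, hl₂S, hne, hall, heq⟩
      have h1 : c l₁ + y (l₁ + i) = μ :=
        le_antisymm (Finset.le_inf' hSne _ hall) (hμle l₁ hl₁S)
      have h2 : c l₂ + y (l₂ + i) = μ := heq ▸ h1
      refine ⟨_, ⟨l₁, hl₁S, h1, rfl⟩, _, ⟨l₂, hl₂S, h2, rfl⟩, ?_⟩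
      intro h
      apply hne
      have := congrArg Prod.snd h
      simp only at this
      have : l₁ + i = l₂ + i := by exact_mod_cast this
      omega
end

section
/- Convexity of the minimal lifts (Lemma 1): let S ⊆ ℤ be finite and nonempty, c : S → ℝ, P = convexHull{(c(l), l) : l ∈ S} + {(t, 0) : t ≥ 0} ⊆ ℝ², y : ℤ → ℝ and Y = {(−y(l), l) : l ∈ ℤ}. For i ∈ ℤ let a_i ∈ ℝ be the minimal real such that P_i := P + (a_i, i) lies above Y (i.e. P + (a_i, i) lies above Y and P + (a, i) does not for any a < a_i). Assume that for every i ∈ ℤ the set P_i ∩ Y contains at least two points. Then the function i ↦ a_i is convex: 2·a_i ≤ a_{i−1} + a_{i+1} for every i ∈ ℤ. -/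
open Pointwise

/-- `a` is the minimal real such that `P + (a, i)` lies above `Y`. -/
def IsMinimalLift (y : ℤ → ℝ) (P : Set (ℝ × ℝ)) (i : ℤ) (a : ℝ) : Prop :=
  LiesAbove y (shiftSet P a i) ∧ ∀ a' < a, ¬ LiesAbove y (shiftSet P a' i)

lemma newtonPolygon_convex (S : Finset ℤ) (c : ℤ → ℝ) : Convex ℝ (NewtonPolygon S c) := by
  refine (convex_convexHull ℝ _).add ?_
  rintro x ⟨t, ht, rfl⟩ z ⟨s, hs, rfl⟩ α β hα hβ hαβ
  exact ⟨α * t + β * s, by positivity, by simp [Prod.ext_iff]⟩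

/-- Key step: if the shifted polygon `P_i` touches `Y` at two heights `l1 < l2`,
then convexity gives the inequality. -/
lemma minimalLift_key (S : Finset ℤ) (c : ℤ → ℝ) (y : ℤ → ℝ) (a : ℤ → ℝ) (i : ℤ)
    (hm : LiesAbove y (shiftSet (NewtonPolygon S c) (a (i - 1)) (i - 1)))
    (hp : LiesAbove y (shiftSet (NewtonPolygon S c) (a (i + 1)) (i + 1)))
    (l1 l2 : ℤ) (h12 : l1 < l2)
    (h1 : (-y l1, (l1 : ℝ)) ∈ shiftSet (NewtonPolygon S c) (a i) i)
    (h2 : (-y l2, (l2 : ℝ)) ∈ shiftSet (NewtonPolygon S c) (a i) i) :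
    2 * a i ≤ a (i - 1) + a (i + 1) := by
  obtain ⟨u1, hu1, hu1e⟩ := h1
  obtain ⟨u2, hu2, hu2e⟩ := h2
  simp only [Prod.mk.injEq] at hu1e hu2e
  obtain ⟨hu11, hu12⟩ := hu1e
  obtain ⟨hu21, hu22⟩ := hu2e
  set n : ℝ := (l2 : ℝ) - (l1 : ℝ) with hn
  have hn1 : (1 : ℝ) ≤ n := by
    have : (l1 : ℝ) + 1 ≤ (l2 : ℝ) := by exact_mod_cast h12
    linarith
  have hn0 : (0 : ℝ) < n := lt_of_lt_of_le one_pos hn1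
  set θ : ℝ := 1 / n with hθ
  have hθ0 : 0 ≤ θ := by positivity
  have hθn : θ * n = 1 := by rw [hθ]; field_simp
  have hθ1 : θ ≤ 1 := by
    rw [hθ]; rw [div_le_one hn0]; exact hn1
  have hconv := newtonPolygon_convex S c
  -- the two interpolated points
  have hr1 : (1 - θ) • u1 + θ • u2 ∈ NewtonPolygon S c :=
    hconv hu1 hu2 (by linarith) hθ0 (by ring)
  have hr2 : θ • u1 + (1 - θ) • u2 ∈ NewtonPolygon S c :=
    hconv hu1 hu2 hθ0 (by linarith) (by ring)
  set r1 := (1 - θ) • u1 + θ • u2 with hr1def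
  set r2 := θ • u1 + (1 - θ) • u2 with hr2def
  have hr1c : r1 = ((1 - θ) * u1.1 + θ * u2.1, (1 - θ) * u1.2 + θ * u2.2) := rfl
  have hr2c : r2 = (θ * u1.1 + (1 - θ) * u2.1, θ * u1.2 + (1 - θ) * u2.2) := rfl
  -- second coordinates of r1, r2
  have hu12' : u1.2 = (l1 : ℝ) - (i : ℝ) := by linarith
  have hu22' : u2.2 = (l2 : ℝ) - (i : ℝ) := by linarith
  have hr12 : r1.2 = (l1 : ℝ) - (i : ℝ) + 1 := by
    rw [hr1c]; simp only
    rw [hu12', hu22']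
    have : (1 - θ) * ((l1:ℝ) - i) + θ * ((l2:ℝ) - i)
        = (l1:ℝ) - i + θ * n := by rw [hn]; ring
    rw [this, hθn]
  have hr22 : r2.2 = (l2 : ℝ) - (i : ℝ) - 1 := by
    rw [hr2c]; simp only
    rw [hu12', hu22']
    have : θ * ((l1:ℝ) - i) + (1 - θ) * ((l2:ℝ) - i)
        = (l2:ℝ) - i - θ * n := by rw [hn]; ring
    rw [this, hθn]
  -- apply LiesAbove at the two neighbors
  have hA1 : -y l1 ≤ r1.1 + a (i - 1) := by
    refine hm (r1.1 + a (i - 1)) l1 ⟨r1, hr1, ?_⟩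
    simp only [Prod.mk.injEq]
    refine ⟨trivial, ?_⟩
    rw [hr12]; push_cast; ring
  have hA2 : -y l2 ≤ r2.1 + a (i + 1) := by
    refine hp (r2.1 + a (i + 1)) l2 ⟨r2, hr2, ?_⟩
    simp only [Prod.mk.injEq]
    refine ⟨trivial, ?_⟩
    rw [hr22]; push_cast; ring
  -- sum of first coordinates
  have hsum : r1.1 + r2.1 = u1.1 + u2.1 := by
    rw [hr1c, hr2c]; simp only; ring
  have hu11' : u1.1 = -y l1 - a i := by linarith
  have hu21' : u2.1 = -y l2 - a i := by linarith
  rw [hu11', hu21'] at hsum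
  linarith

/-- Convexity of the minimal lifts (Lemma 1): if `a i` is the minimal real such
that `P_i := P + (a i, i)` lies above `Y`, and every `P_i ∩ Y` contains at least
two points, then `i ↦ a i` is convex: `2·a i ≤ a (i-1) + a (i+1)`. -/
theorem minimalLift_convex
    (S : Finset ℤ) (hS : S.Nonempty) (c : ℤ → ℝ) (y : ℤ → ℝ) (a : ℤ → ℝ)
    (ha : ∀ i : ℤ, IsMinimalLift y (NewtonPolygon S c) i (a i))
    (htwo : ∀ i : ℤ, ∃ p ∈ shiftSet (NewtonPolygon S c) (a i) i ∩ YSet y,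
      ∃ q ∈ shiftSet (NewtonPolygon S c) (a i) i ∩ YSet y, p ≠ q) :
    ∀ i : ℤ, 2 * a i ≤ a (i - 1) + a (i + 1) := by
  intro i
  obtain ⟨p, ⟨hpP, hpY⟩, q, ⟨hqP, hqY⟩, hpq⟩ := htwo i
  obtain ⟨l1, rfl⟩ := hpY
  obtain ⟨l2, rfl⟩ := hqY
  have hl : l1 ≠ l2 := by rintro rfl; exact hpq rfl
  rcases hl.lt_or_gt with h | h
  · exact minimalLift_key S c y a i (ha (i - 1)).1 (ha (i + 1)).1 l1 l2 h hpP hqP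
  · exact minimalLift_key S c y a i (ha (i - 1)).1 (ha (i + 1)).1 l2 l1 h hqP hpP
end

section
/- Mirror lower bound on the decrement of minimal lifts (Remark to Lemma 2): let S ⊆ ℤ be finite and nonempty, c : S → ℝ, P = convexHull{(c(l), l) : l ∈ S} + {(t, 0) : t ≥ 0} ⊆ ℝ², y : ℤ → ℝ, Y = {(−y(l), l) : l ∈ ℤ}, and for i ∈ ℤ let a_i be the minimal real such that P_i := P + (a_i, i) lies above Y. Suppose (u, l) ∈ P_i ∩ Y with l ∈ ℤ, and that (u − b, l + 1) ∈ P_i for some b ∈ ℝ. Then a_{i−1} − a_i ≥ b. -/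
open Pointwise

/-- Mirror lower bound on the decrement of minimal lifts (Remark to Lemma 2):
if `(u, l) ∈ P_i ∩ Y` and `(u - b, l + 1) ∈ P_i`, then `a (i-1) - a i ≥ b`. -/
theorem minimalLift_decrement_lower_bound
    (S : Finset ℤ) (hS : S.Nonempty) (c : ℤ → ℝ) (y : ℤ → ℝ) (a : ℤ → ℝ)
    (ha : ∀ i : ℤ, IsMinimalLift y (NewtonPolygon S c) i (a i))
    (i : ℤ) (u : ℝ) (l : ℤ) (b : ℝ)
    (hu : (u, (l : ℝ)) ∈ shiftSet (NewtonPolygon S c) (a i) i ∩ YSet y)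
    (hb : (u - b, (l : ℝ) + 1) ∈ shiftSet (NewtonPolygon S c) (a i) i) :
    b ≤ a (i - 1) - a i := by
  obtain ⟨p, hp, hpe⟩ := hb
  obtain ⟨l', hl'⟩ := hu.2
  have h1 : u = -y l' := congrArg Prod.fst hl'
  have h2 : (l : ℝ) = (l' : ℝ) := congrArg Prod.snd hl'
  have hll : l = l' := by exact_mod_cast h2
  subst hll
  have he1 : p.1 + a i = u - b := congrArg Prod.fst hpe
  have he2 : p.2 + (i : ℝ) = (l : ℝ) + 1 := congrArg Prod.snd hpe
  have hmem : (p.1 + a (i - 1), (l : ℝ)) ∈ shiftSet (NewtonPolygon S c) (a (i - 1)) (i - 1) := by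
    refine ⟨p, hp, ?_⟩
    have : p.2 + ((i - 1 : ℤ) : ℝ) = (l : ℝ) := by push_cast; linarith
    push_cast at this
    simp [this]
  have := (ha (i - 1)).1 _ l hmem
  linarith
end

section
/- Infinite dual Nullstellensatz (classical): let K be an algebraically closed field and F_1, …, F_s ∈ K[X_1, …, X_n]. Then the system F_1 = ⋯ = F_s = 0 has a solution in K^n if and only if there exists a function y from the set of multi-indices ℕ^n to K with y(0) ≠ 0 such that for every multi-index I ∈ ℕ^n and every j ∈ {1, …, s} the (finite) sum over all multi-indices J of coeff_J(X^I · F_j) · y(J) equals 0, where coeff_J denotes the coefficient of the monomial X^J. -/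
/-!
A function `y` on multi-indices is the same thing as a linear functional on `K[X]`, namely the
one taking the value `y J` on the monomial `X^J`; the sums in the statement are this functional
evaluated at `X^I F_j`. The condition therefore says that the functional kills the ideal
`⟨F_1, …, F_s⟩` but not `1`, so the ideal is proper and has a common zero by the weak
Nullstellensatz. Conversely, a common zero `x` yields `y J = x^J`, whose functional is
evaluation at `x`.
-/

open MvPolynomial

namespace MvPolynomial

variable {σ R : Type*} [CommSemiring R]

theorem basisMonomials_constr_apply (y : (σ →₀ ℕ) → R) (p : MvPolynomial σ R) :
    (basisMonomials σ R).constr R y p = ∑ J ∈ p.support, coeff J p * y J := by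
  rw [Module.Basis.constr_apply]
  rfl

theorem basisMonomials_constr_monomial (y : (σ →₀ ℕ) → R) (J : σ →₀ ℕ) :
    (basisMonomials σ R).constr R y (monomial J 1) = y J := by
  simpa using (basisMonomials σ R).constr_basis R y J

theorem basisMonomials_constr_eval (x : σ → R) :
    (basisMonomials σ R).constr R (fun J => eval x (monomial J 1)) = (aeval x).toLinearMap :=
  (basisMonomials σ R).ext fun J => by simp [basisMonomials_constr_monomial]

theorem map_eq_zero_of_mem_span_of_monomial_mul {M : Type*} [AddCommMonoid M] [Module R M]
    {φ : MvPolynomial σ R →ₗ[R] M} {S : Set (MvPolynomial σ R)}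
    (h : ∀ f ∈ S, ∀ I, φ (monomial I 1 * f) = 0) {p : MvPolynomial σ R}
    (hp : p ∈ Ideal.span S) : φ p = 0 := by
  suffices ∀ q, φ (q * p) = 0 by simpa using this 1
  induction hp using Submodule.span_induction with
  | mem f hf =>
    intro q
    induction q using MvPolynomial.induction_on' with
    | monomial I a =>
      have hsmul : monomial I a = a • monomial I (1 : R) := by
        rw [smul_monomial, smul_eq_mul, mul_one]
      rw [hsmul, smul_mul_assoc, map_smul, h f hf, smul_zero]
    | add q₁ q₂ h₁ h₂ => rw [add_mul, map_add, h₁, h₂, add_zero]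
  | zero => simp
  | add f g _ _ hf hg => intro q; rw [mul_add, map_add, hf, hg, add_zero]
  | smul a f _ hf => intro q; rw [smul_eq_mul, ← mul_assoc, hf]

theorem exists_eval_eq_zero_of_ne_top {K : Type*} [Field K] [IsAlgClosed K] [Finite σ]
    {I : Ideal (MvPolynomial σ K)} (hI : I ≠ ⊤) : ∃ x : σ → K, ∀ p ∈ I, eval x p = 0 := by
  obtain ⟨M, hM, hIM⟩ := I.exists_le_maximal hI
  obtain ⟨x, rfl⟩ := eq_vanishingIdeal_singleton_of_isMaximal K hM
  exact ⟨x, fun p hp => (mem_vanishingIdeal_singleton_iff x p).mp (hIM hp)⟩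

end MvPolynomial

/-- Infinite dual Nullstellensatz (classical): over an algebraically closed
field `K`, the system `F₁ = ⋯ = F_s = 0` has a solution in `Kⁿ` iff there is a
function `y` on multi-indices with `y 0 ≠ 0` such that for every multi-index `I`
and every `j`, the sum over the support of `X^I · F j` of
`coeff J (X^I · F j) · y J` vanishes. -/
theorem infinite_dual_nullstellensatz
    (K : Type*) [Field K] [IsAlgClosed K] (n s : ℕ)
    (F : Fin s → MvPolynomial (Fin n) K) :
    (∃ x : Fin n → K, ∀ j : Fin s, eval x (F j) = 0) ↔
      (∃ y : (Fin n →₀ ℕ) → K, y 0 ≠ 0 ∧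
        ∀ I : Fin n →₀ ℕ, ∀ j : Fin s,
          ∑ J ∈ (monomial I (1 : K) * F j).support,
            coeff J (monomial I (1 : K) * F j) * y J = 0) := by
  simp only [← basisMonomials_constr_apply]
  constructor
  · rintro ⟨x, hx⟩
    refine ⟨fun J => eval x (monomial J 1), by simp, fun I j => ?_⟩
    simp [basisMonomials_constr_eval, hx j]
  · rintro ⟨y, hy0, hy⟩
    have hone : (1 : MvPolynomial (Fin n) K) ∉ Ideal.span (Set.range F) := fun hmem => hy0 <| by
      rw [← basisMonomials_constr_monomial (R := K) y 0, ← one_def]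
      exact map_eq_zero_of_mem_span_of_monomial_mul (by rintro _ ⟨j, rfl⟩ I; exact hy I j) hmem
    obtain ⟨x, hx⟩ := exists_eval_eq_zero_of_ne_top ((Ideal.ne_top_iff_one _).mpr hone)
    exact ⟨x, fun j => hx (F j) (Ideal.subset_span ⟨j, rfl⟩)⟩
end
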